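/- arXiv:2301.01136 — 2 statements merged into one kernel-verified Lean document; each statement's English description precedes it below -/
import Mathlib

section
/- Under the hypotheses of the state estimate, suppose in addition that for each q_ε ∈ L²(O_ε*) there exists g_ε ∈ H¹_{Γ₀}(O_ε*)ⁿ with div g_ε = q_ε and ‖∇g_ε‖_{L²} ≤ C₀‖q_ε‖_{L²} (uniform Bogovskii-type estimate). Then the pressure p_ε in the weak Stokes formulation satisfies ‖p_ε‖_{L²(O_ε*)} ≤ C₀( m₂‖∇u_ε‖_{L²} + C‖θ_ε‖_{L²} ), where m₂ is the upper ellipticity constant and C is the Poincaré constant. -/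
open scoped InnerProductSpace

/-! If `d` has a right inverse bounded by `C₀` (Bogovskii), the pressure is controlled by the
dual norm of `φ ↦ ⟪p, d φ⟫`. Testing the weak Stokes formulation against `φ` expresses this
functional through `u` and `θ`, and the Poincaré inequality together with the upper ellipticity
bound shows that its dual norm is at most `m₂ ‖G u‖ + C ‖θ‖`. -/

lemma norm_le_of_inner_apply_le_of_exists_bounded_preimage {V Q : Type*}
    [NormedAddCommGroup Q] [InnerProductSpace ℝ Q]
    (d : V → Q) (N : V → ℝ) (p : Q) {K C₀ : ℝ} (hK : 0 ≤ K) (hC₀ : 0 ≤ C₀)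
    (hbound : ∀ φ : V, ⟪p, d φ⟫_ℝ ≤ K * N φ)
    (hpre : ∃ g : V, d g = p ∧ N g ≤ C₀ * ‖p‖) :
    ‖p‖ ≤ C₀ * K := by
  obtain ⟨g, rfl, hNg⟩ := hpre
  have hsq : ‖d g‖ ^ 2 ≤ (C₀ * K) * ‖d g‖ :=
    calc ‖d g‖ ^ 2 = ⟪d g, d g⟫_ℝ := (real_inner_self_eq_norm_sq _).symm
      _ ≤ K * N g := hbound g
      _ ≤ K * (C₀ * ‖d g‖) := mul_le_mul_of_nonneg_left hNg hK
      _ = (C₀ * K) * ‖d g‖ := by ring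
  nlinarith [norm_nonneg (d g), mul_nonneg hC₀ hK]

lemma inner_pressure_div_le {V W X Q : Type*}
    [NormedAddCommGroup V] [InnerProductSpace ℝ V]
    [NormedAddCommGroup W] [InnerProductSpace ℝ W]
    [NormedAddCommGroup X] [InnerProductSpace ℝ X]
    [NormedAddCommGroup Q] [InnerProductSpace ℝ Q]
    {ι : V →L[ℝ] W} {G : V →L[ℝ] X} {d : V →L[ℝ] Q} {Aop : X →L[ℝ] X}
    {u : V} {p : Q} {θ : W} {C m₂ : ℝ}
    (hPoin : ∀ v : V, ‖ι v‖ ≤ C * ‖G v‖)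
    (hup : ∀ ξ : X, ‖Aop ξ‖ ≤ m₂ * ‖ξ‖)
    (heq : ∀ φ : V, ⟪Aop (G u), G φ⟫_ℝ - ⟪p, d φ⟫_ℝ = ⟪θ, ι φ⟫_ℝ) (φ : V) :
    ⟪p, d φ⟫_ℝ ≤ (m₂ * ‖G u‖ + C * ‖θ‖) * ‖G φ‖ := by
  have hA : ⟪Aop (G u), G φ⟫_ℝ ≤ m₂ * ‖G u‖ * ‖G φ‖ :=
    (real_inner_le_norm _ _).trans
      (mul_le_mul_of_nonneg_right (hup (G u)) (norm_nonneg _))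
  have hθ : -⟪θ, ι φ⟫_ℝ ≤ ‖θ‖ * (C * ‖G φ‖) :=
    calc -⟪θ, ι φ⟫_ℝ ≤ ‖θ‖ * ‖ι φ‖ := neg_le.mp (neg_le_of_abs_le (abs_real_inner_le_norm _ _))
      _ ≤ ‖θ‖ * (C * ‖G φ‖) := mul_le_mul_of_nonneg_left (hPoin φ) (norm_nonneg _)
  linarith [heq φ]

theorem stmt_4_general {V W X Q : Type*}
    [NormedAddCommGroup V] [InnerProductSpace ℝ V]
    [NormedAddCommGroup W] [InnerProductSpace ℝ W]
    [NormedAddCommGroup X] [InnerProductSpace ℝ X]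
    [NormedAddCommGroup Q] [InnerProductSpace ℝ Q]
    (ι : V →L[ℝ] W) (G : V →L[ℝ] X) (d : V →L[ℝ] Q) (Aop : X →L[ℝ] X)
    (uε : V) (pε : Q) (θε : W) (C C₀ m₂ : ℝ)
    (hC : 0 < C) (hC₀ : 0 < C₀)
    -- Poincaré inequality with constant independent of ε
    (hPoin : ∀ v : V, ‖ι v‖ ≤ C * ‖G v‖)
    -- upper ellipticity bound of A_ε
    (hup : ∀ ξ : X, ‖Aop ξ‖ ≤ m₂ * ‖ξ‖)
    -- uniform Bogovskii-type estimate: div G is onto with uniform bound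
    (hBog : ∀ q : Q, ∃ g : V, d g = q ∧ ‖G g‖ ≤ C₀ * ‖q‖)
    -- weak Stokes formulation: ∫ A_ε∇u_ε:∇φ − ∫ p_ε div φ = ∫ θ_ε·φ for all φ
    (heq : ∀ φ : V, ⟪Aop (G uε), G φ⟫_ℝ - ⟪pε, d φ⟫_ℝ = ⟪θε, ι φ⟫_ℝ) :
    ‖pε‖ ≤ C₀ * (m₂ * ‖G uε‖ + C * ‖θε‖) := by
  have hK : 0 ≤ m₂ * ‖G uε‖ + C * ‖θε‖ :=
    add_nonneg ((norm_nonneg _).trans (hup (G uε))) (by positivity)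
  exact norm_le_of_inner_apply_le_of_exists_bounded_preimage d (fun φ => ‖G φ‖) pε hK hC₀.le
    (inner_pressure_div_le hPoin hup heq) (hBog pε)

/-- Abstract formulation of the pressure estimate (5.5).
`V` plays the role of `H¹_{Γ₀}(O_ε*)ⁿ`, `W` of `L²(O_ε*)ⁿ`, `X` of `L²(O_ε*)^{n×n}`
(gradients) and `Q` of `L²(O_ε*)` (pressures); `ι` is the embedding, `G` the gradient,
`d` the divergence, `Aop` multiplication by the uniformly elliptic matrix `A_ε`. -/
theorem stmt_4 {V W X Q : Type*}
    [NormedAddCommGroup V] [InnerProductSpace ℝ V]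
    [NormedAddCommGroup W] [InnerProductSpace ℝ W]
    [NormedAddCommGroup X] [InnerProductSpace ℝ X]
    [NormedAddCommGroup Q] [InnerProductSpace ℝ Q]
    (ι : V →L[ℝ] W) (G : V →L[ℝ] X) (d : V →L[ℝ] Q) (Aop : X →L[ℝ] X)
    (uε : V) (pε : Q) (θε : W) (C C₀ m₂ : ℝ)
    (hC : 0 < C) (hC₀ : 0 < C₀) (hm₂ : 0 < m₂)
    -- Poincaré inequality with constant independent of ε
    (hPoin : ∀ v : V, ‖ι v‖ ≤ C * ‖G v‖)
    -- upper ellipticity bound of A_ε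
    (hup : ∀ ξ : X, ‖Aop ξ‖ ≤ m₂ * ‖ξ‖)
    -- uniform Bogovskii-type estimate: div G is onto with uniform bound
    (hBog : ∀ q : Q, ∃ g : V, d g = q ∧ ‖G g‖ ≤ C₀ * ‖q‖)
    -- weak Stokes formulation: ∫ A_ε∇u_ε:∇φ − ∫ p_ε div φ = ∫ θ_ε·φ for all φ
    (heq : ∀ φ : V, ⟪Aop (G uε), G φ⟫_ℝ - ⟪pε, d φ⟫_ℝ = ⟪θε, ι φ⟫_ℝ)
    (hdiv : d uε = 0) :
    ‖pε‖ ≤ C₀ * (m₂ * ‖G uε‖ + C * ‖θε‖) :=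
  stmt_4_general ι G d Aop uε pε θε C C₀ m₂ hC hC₀ hPoin hup hBog heq
end

section
/- Taking the test function y = (y₁,…,yₙ) in the weak formulation of the cell problem for (χ_j^β, Π_j^β) yields Σ_{i,l,k,α} ∫_{W*} a_{lk} ∂/∂y_k(P_j^β − χ_j^β)_i · ∂P_i^α/∂y_l · ∂y_i/∂y_α dy = n ∫_{W*} Π_j^β dy; consequently the mean of the pressure corrector satisfies M_{W*}(Π_j^β) = (1/n) Σ_{i,α} a_{ij}^{αβ} δ_{iα}, where a_{ij}^{αβ} = (1/|W*|)∫_{W*} A(y)∇_y(P_j^β − χ_j^β) : ∇_y P_i^α dy. -/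
open MeasureTheory Filter

noncomputable section

/-- The reference cell `W = (0,1)ⁿ`. -/
def Wcell (n : ℕ) : Set (Fin n → ℝ) := Set.univ.pi fun _ => Set.Ioo (0 : ℝ) 1

/-- The perforated reference cell `W* = W \ Y`. -/
def Wstar (n : ℕ) (Y : Set (Fin n → ℝ)) : Set (Fin n → ℝ) := Wcell n \ Y

/-- Frobenius product `M : N = Σ_{i,j} M i j * N i j`. -/
def mdot {n : ℕ} (M N : Matrix (Fin n) (Fin n) ℝ) : ℝ := ∑ i, ∑ j, M i j * N i j

/-- Squared Frobenius norm. -/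
def mnormSq {n : ℕ} (M : Matrix (Fin n) (Fin n) ℝ) : ℝ := ∑ i, ∑ j, (M i j) ^ 2

/-- Diagonal action of a matrix `A` on a gradient matrix `M` (rows = components):
`(A∇u)_{k i} = Σ_j a_{ij} ∂_j u_k`, with `M k j = ∂_j u_k`. -/
def Aact {n : ℕ} (A M : Matrix (Fin n) (Fin n) ℝ) : Matrix (Fin n) (Fin n) ℝ :=
  Matrix.of fun k i => ∑ j, A i j * M k j

/-- Gradient of `P_j^β(y) = (0,…,y_j,…,0)` (with `y_j` in position `β`):
the constant matrix with entry `1` at `(β, j)`. -/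
def gradP (n : ℕ) (j β : Fin n) : Matrix (Fin n) (Fin n) ℝ :=
  Matrix.single β j 1

end

/-! Testing the cell problem with `y ↦ y`, whose gradient is the identity and whose divergence
is `n`, gives `∫ A∇(P - χ) : I = n ∫ Π`. Since `I = Σᵢ ∇Pᵢⁱ` and `M : ∇Pᵢ^α = M_{αi}`, the left side
is the diagonal sum `Σᵢ ∫ A∇(P - χ) : ∇Pᵢⁱ`, which after division by `n |W*|` is the claimed mean. -/

section

variable {n : ℕ}

lemma mdot_single_one (M : Matrix (Fin n) (Fin n) ℝ) (i j : Fin n) :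
    mdot M (Matrix.single i j 1) = M i j := by
  simp [mdot, Matrix.single_apply, ite_and]

lemma mdot_one (M : Matrix (Fin n) (Fin n) ℝ) : mdot M 1 = M.trace := by
  simp [mdot, Matrix.one_apply, Matrix.trace]

lemma sum_mdot_gradP_diag (M : Matrix (Fin n) (Fin n) ℝ) :
    ∑ i, mdot M (gradP n i i) = mdot M 1 := by
  simp only [gradP, mdot_single_one, mdot_one, Matrix.trace, Matrix.diag]

lemma integral_mdot_one_eq_sum_integral_mdot_gradP {α : Type*} [MeasurableSpace α]
    {μ : Measure α} (F : α → Matrix (Fin n) (Fin n) ℝ)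
    (hF : ∀ i, Integrable (fun y => mdot (F y) (gradP n i i)) μ) :
    ∫ y, mdot (F y) 1 ∂μ = ∑ i, ∫ y, mdot (F y) (gradP n i i) ∂μ := by
  simp_rw [← sum_mdot_gradP_diag]
  exact integral_finsetSum _ fun i _ => hF i

end

theorem stmt_15 (n : ℕ) (hn : 0 < n) (Y : Set (Fin n → ℝ))
    (A : (Fin n → ℝ) → Matrix (Fin n) (Fin n) ℝ)
    (gradχ : Fin n → Fin n → (Fin n → ℝ) → Matrix (Fin n) (Fin n) ℝ)  -- ∇_y χ_j^β
    (Pp : Fin n → Fin n → (Fin n → ℝ) → ℝ)                            -- Π_j^β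
    (j β : Fin n)
    -- class of admissible (gradients of) test functions for the cell problem;
    -- the function y ↦ y has gradient the identity matrix and is admissible
    (CellTest : ((Fin n → ℝ) → Matrix (Fin n) (Fin n) ℝ) → Prop)
    (hId : CellTest (fun _ => (1 : Matrix (Fin n) (Fin n) ℝ)))
    -- weak formulation of the cell problem (6.3)
    (hweak : ∀ gv, CellTest gv →
      (∫ y in Wstar n Y, mdot (Aact (A y) (gradP n j β - gradχ j β y)) (gv y))
        = ∫ y in Wstar n Y, Pp j β y * Matrix.trace (gv y))
    (hint : ∀ i α : Fin n, IntegrableOn (fun y =>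
      mdot (Aact (A y) (gradP n j β - gradχ j β y)) (gradP n i α)) (Wstar n Y)) :
    -- identity (7.23a) obtained with the test function y ↦ y
    ((∫ y in Wstar n Y,
        mdot (Aact (A y) (gradP n j β - gradχ j β y)) (1 : Matrix (Fin n) (Fin n) ℝ))
      = (n : ℝ) * ∫ y in Wstar n Y, Pp j β y)
    -- consequently: M_{W*}(Π_j^β) = (1/n) Σ_{i,α} a_{ij}^{αβ} δ_{iα}
    ∧ ((volume (Wstar n Y)).toReal⁻¹ * (∫ y in Wstar n Y, Pp j β y)
      = (1 / (n : ℝ)) * ∑ i, ∑ α,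
          ((volume (Wstar n Y)).toReal⁻¹ *
            ∫ y in Wstar n Y, mdot (Aact (A y) (gradP n j β - gradχ j β y)) (gradP n i α))
          * (if i = α then (1 : ℝ) else 0)) := by
  set F := fun y => Aact (A y) (gradP n j β - gradχ j β y)
  have hId_test : ∫ y in Wstar n Y, mdot (F y) 1 = (n : ℝ) * ∫ y in Wstar n Y, Pp j β y := by
    rw [hweak _ hId, Matrix.trace_one, Fintype.card_fin, integral_mul_const, mul_comm]
  have hdiag := integral_mdot_one_eq_sum_integral_mdot_gradP F fun i => hint i i
  refine ⟨hId_test, ?_⟩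
  have hn' : (n : ℝ) ≠ 0 := Nat.cast_ne_zero.mpr hn.ne'
  simp only [mul_ite, mul_one, mul_zero, Finset.sum_ite_eq, Finset.mem_univ, if_true,
    ← Finset.mul_sum]
  rw [← hdiag, hId_test]
  field_simp
end
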